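/- arXiv:1705.08300 — 2 statements merged into one kernel-verified Lean document; each statement's English description precedes it below -/
import Mathlib

section
/- Let W be a real separable Banach space and let μ be a centered Gaussian measure on W. Let h ∈ W be such that sup{ ℓ(h) : ℓ ∈ W*, Cov_μ(ℓ,ℓ) ≤ 1 } = ∞ (i.e. h does not lie in the Cameron–Martin space H_μ). Then the pushforward of μ under the translation map T_h : x ↦ x + h and the measure μ are mutually singular. -/
/-!
Since `h` has infinite Cameron–Martin norm, there are functionals `ℓₙ` of variance at most one
with `ℓₙ h ≥ 2 ^ (n + 1)`. By Chebyshev, `|ℓₙ| ≥ ℓₙ h / 2` has `μ`-probability at most `4⁻ⁿ`,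
so by Borel–Cantelli `μ`-almost every `x` eventually satisfies `ℓₙ x < ℓₙ h / 2`, while almost
every point `x + h` of the translated measure eventually satisfies `ℓₙ (x + h) > ℓₙ h / 2`.
-/

open MeasureTheory ProbabilityTheory NNReal

/-- A Borel probability measure on a real Banach space is a *centered Gaussian measure*
if the pushforward under every continuous linear functional is a (possibly degenerate)
centered real Gaussian measure. -/
def IsCenteredGaussian {W : Type*} [NormedAddCommGroup W] [NormedSpace ℝ W]
    [MeasurableSpace W] (μ : Measure W) : Prop :=
  ∀ ℓ : W →L[ℝ] ℝ, ∃ v : ℝ≥0, μ.map ℓ = gaussianReal 0 v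

open Filter
open scoped ENNReal

theorem ENNReal.tsum_pow_ne_top {r : ℝ≥0∞} (hr : r < 1) : ∑' n : ℕ, r ^ n ≠ ∞ := by
  rw [ENNReal.tsum_geometric]
  exact ENNReal.inv_ne_top.2 (tsub_pos_of_lt hr).ne'

theorem MeasureTheory.Measure.mutuallySingular_of_tsum_ne_top {α : Type*} [MeasurableSpace α]
    {μ ν : Measure α} (s : ℕ → Set α) (hμ : ∑' n, μ (s n) ≠ ∞) (hν : ∑' n, ν (s n)ᶜ ≠ ∞) :
    μ ⟂ₘ ν := by
  refine ⟨toMeasurable μ (limsup s atTop), measurableSet_toMeasurable _ _, ?_, ?_⟩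
  · rw [measure_toMeasurable]
    exact measure_limsup_atTop_eq_zero hμ
  · refine measure_mono_null ?_ (measure_limsup_atTop_eq_zero hν)
    calc (toMeasurable μ (limsup s atTop))ᶜ ⊆ (limsup s atTop)ᶜ :=
          Set.compl_subset_compl.2 (subset_toMeasurable _ _)
      _ = liminf (fun n => (s n)ᶜ) atTop := limsup_compl ..
      _ ⊆ limsup (fun n => (s n)ᶜ) atTop := liminf_le_limsup

theorem MeasureTheory.Measure.mutuallySingular_map_add_right_of_tsum_ne_top {G : Type*}
    [AddGroup G] [MeasurableSpace G] [MeasurableAdd G] {μ : Measure G} {h : G}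
    (ℓ : ℕ → G →+ ℝ) (htail : ∑' n, μ {x | ℓ n h / 2 ≤ |ℓ n x|} ≠ ∞) :
    μ.map (· + h) ⟂ₘ μ := by
  refine mutuallySingular_of_tsum_ne_top (fun n => {x | ℓ n x ≤ ℓ n h / 2}) ?_ ?_ <;>
    refine ne_top_of_le_ne_top htail (ENNReal.tsum_le_tsum fun n => ?_)
  · rw [← MeasurableEquiv.coe_addRight, MeasurableEquiv.map_apply]
    refine measure_mono fun x hx => ?_
    simp only [Set.mem_preimage, MeasurableEquiv.coe_addRight, Set.mem_ofPred_eq, map_add] at hx ⊢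
    exact (by linarith : ℓ n h / 2 ≤ -ℓ n x).trans (neg_le_abs _)
  · refine measure_mono fun x hx => ?_
    simp only [Set.mem_compl_iff, Set.mem_ofPred_eq, not_le] at hx ⊢
    exact hx.le.trans (le_abs_self _)

section

variable {W : Type*} [NormedAddCommGroup W] [NormedSpace ℝ W] [MeasurableSpace W] [BorelSpace W]
  {μ : Measure W}

theorem IsCenteredGaussian.isGaussian (hμ : IsCenteredGaussian μ) : IsGaussian μ :=
  isGaussian_of_map_eq_gaussianReal fun ℓ => ⟨0, hμ ℓ⟩

theorem IsCenteredGaussian.integral_dual (hμ : IsCenteredGaussian μ) (ℓ : W →L[ℝ] ℝ) :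
    ∫ x, ℓ x ∂μ = 0 := by
  obtain ⟨v, hv⟩ := hμ ℓ
  calc ∫ x, ℓ x ∂μ = ∫ y, y ∂μ.map ℓ :=
        (integral_map ℓ.continuous.aemeasurable aestronglyMeasurable_id).symm
    _ = 0 := by rw [hv, integral_id_gaussianReal]

theorem IsCenteredGaussian.meas_ge_le_integral_sq_div_sq (hμ : IsCenteredGaussian μ)
    (ℓ : W →L[ℝ] ℝ) {c : ℝ} (hc : 0 < c) :
    μ {x | c ≤ |ℓ x|} ≤ ENNReal.ofReal ((∫ x, ℓ x ^ 2 ∂μ) / c ^ 2) := by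
  have := hμ.isGaussian
  have h := meas_ge_le_variance_div_sq (IsGaussian.memLp_dual μ ℓ 2 (by simp)) hc
  rw [hμ.integral_dual, variance_of_integral_eq_zero (by fun_prop) (hμ.integral_dual ℓ)] at h
  simpa only [sub_zero] using h

end

theorem cameronMartin_translate_mutuallySingular_general
    {W : Type*} [NormedAddCommGroup W] [NormedSpace ℝ W]
    [MeasurableSpace W] [BorelSpace W]
    (μ : Measure W) (hμ : IsCenteredGaussian μ)
    (h : W)
    (hh : ¬ BddAbove {r : ℝ | ∃ ℓ : W →L[ℝ] ℝ, (∫ x, ℓ x * ℓ x ∂μ) ≤ 1 ∧ ℓ h = r}) :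
    Measure.MutuallySingular (μ.map (fun x => x + h)) μ := by
  have hsel : ∀ n : ℕ, ∃ ℓ : W →L[ℝ] ℝ, ∫ x, ℓ x ^ 2 ∂μ ≤ 1 ∧ 2 ^ n ≤ ℓ h / 2 := fun n => by
    obtain ⟨_, ⟨ℓ, hℓ, rfl⟩, hlt⟩ := not_bddAbove_iff.1 hh (2 * 2 ^ n)
    exact ⟨ℓ, by simpa only [sq] using hℓ, by linarith⟩
  choose ℓ hℓ hℓh using hsel
  have htail : ∀ n, μ {x | ℓ n h / 2 ≤ |ℓ n x|} ≤ 4⁻¹ ^ n := fun n => by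
    have hc : (0 : ℝ) < 2 ^ n := by positivity
    calc μ {x | ℓ n h / 2 ≤ |ℓ n x|}
        ≤ ENNReal.ofReal ((∫ x, ℓ n x ^ 2 ∂μ) / (ℓ n h / 2) ^ 2) :=
          hμ.meas_ge_le_integral_sq_div_sq _ (hc.trans_le (hℓh n))
      _ ≤ ENNReal.ofReal (1 / (2 ^ n) ^ 2) := by gcongr; exacts [hℓ n, hℓh n]
      _ = 4⁻¹ ^ n := by
          rw [← pow_mul, pow_mul', one_div, ← inv_pow, ENNReal.ofReal_pow (by norm_num),
            ENNReal.ofReal_inv_of_pos (by norm_num)]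
          norm_num
  exact Measure.mutuallySingular_map_add_right_of_tsum_ne_top (fun n => (ℓ n : W →+ ℝ))
    (ne_top_of_le_ne_top (ENNReal.tsum_pow_ne_top (by norm_num)) (ENNReal.tsum_le_tsum htail))

/-- If `h` has infinite Cameron–Martin norm (i.e. does not lie in the Cameron–Martin space
`H_μ`), then the translate of `μ` by `h` and `μ` are mutually singular. -/
theorem cameronMartin_translate_mutuallySingular
    {W : Type*} [NormedAddCommGroup W] [NormedSpace ℝ W] [CompleteSpace W]
    [TopologicalSpace.SeparableSpace W] [MeasurableSpace W] [BorelSpace W]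
    (μ : Measure W) [IsProbabilityMeasure μ] (hμ : IsCenteredGaussian μ)
    (h : W)
    (hh : ¬ BddAbove {r : ℝ | ∃ ℓ : W →L[ℝ] ℝ, (∫ x, ℓ x * ℓ x ∂μ) ≤ 1 ∧ ℓ h = r}) :
    Measure.MutuallySingular (μ.map (fun x => x + h)) μ :=
  cameronMartin_translate_mutuallySingular_general μ hμ h hh
end

section
/- Let γ be the Gaussian measure N(0,σ²) on ℝ with σ > 0, let a > 0, and let T_a : ℝ → ℝ be the translation x ↦ x + a. Then the lattice infimum of γ and T_a#γ has total mass (γ ⊓ (T_a#γ))(ℝ) = 2·γ₁([a/(2σ), ∞)), where γ₁ is the standard Gaussian measure N(0,1) on ℝ; equivalently, the total variation distance between N(0,σ²) and N(a,σ²) equals 1 − 2·γ₁([a/(2σ), ∞)). -/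
open MeasureTheory ProbabilityTheory NNReal Set

/-!
The densities of `N(0,σ²)` and `N(a,σ²)` cross at `a / 2`, so `s = (-∞, a/2)` is a Hahn set:
`N(a,σ²) ≤ N(0,σ²)` on `s` and the reverse on `sᶜ`. Hence the infimum is `N(0,σ²)` on `sᶜ`
plus `N(a,σ²)` on `s`, and both pieces are the Gaussian tail `γ₁([a/(2σ), ∞))` after
reflecting about `a / 2` and rescaling by `σ`. On the other hand, for any two probability
measures `|μ A - ν A| ≤ 1 - (μ ⊓ ν)(univ)`, with equality at a Hahn set.
-/

namespace MeasureTheory.Measure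

variable {α : Type*} {mα : MeasurableSpace α} {μ ν : Measure α}

theorem inf_eq_restrict_add_restrict {s : Set α} (hs : MeasurableSet s)
    (hνμ : ν.restrict s ≤ μ.restrict s) (hμν : μ.restrict sᶜ ≤ ν.restrict sᶜ) :
    μ ⊓ ν = μ.restrict sᶜ + ν.restrict s := by
  refine le_antisymm ?_ (le_inf ?_ ?_)
  · calc μ ⊓ ν = (μ ⊓ ν).restrict sᶜ + (μ ⊓ ν).restrict s := by
          rw [add_comm, restrict_add_restrict_compl hs]
      _ ≤ μ.restrict sᶜ + ν.restrict s :=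
          add_le_add (restrict_mono subset_rfl inf_le_left) (restrict_mono subset_rfl inf_le_right)
  · calc μ.restrict sᶜ + ν.restrict s ≤ μ.restrict sᶜ + μ.restrict s :=
          add_le_add_right hνμ _
      _ = μ := by rw [add_comm, restrict_add_restrict_compl hs]
  · calc μ.restrict sᶜ + ν.restrict s ≤ ν.restrict sᶜ + ν.restrict s :=
          add_le_add_left hμν _
      _ = ν := by rw [add_comm, restrict_add_restrict_compl hs]

theorem real_add_inf_real_univ_le [IsProbabilityMeasure μ] [IsFiniteMeasure ν] {A : Set α}
    (hA : MeasurableSet A) :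
    μ.real A + (μ ⊓ ν).real univ ≤ 1 + ν.real A := by
  have h_le {ρ ρ' : Measure α} [IsFiniteMeasure ρ'] (h : ρ ≤ ρ') (t : Set α) :
      ρ.real t ≤ ρ'.real t :=
    ENNReal.toReal_mono (measure_ne_top _ _) (h t)
  have : IsFiniteMeasure (μ ⊓ ν) := isFiniteMeasure_of_le μ inf_le_left
  rw [← measureReal_add_measureReal_compl hA (μ := μ ⊓ ν)]
  linarith [h_le (inf_le_right : μ ⊓ ν ≤ ν) A, h_le (inf_le_left : μ ⊓ ν ≤ μ) Aᶜ,
    probReal_compl_eq_one_sub (μ := μ) hA]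

variable [IsProbabilityMeasure μ] [IsProbabilityMeasure ν]

theorem abs_real_sub_le_one_sub_inf_real_univ {A : Set α} (hA : MeasurableSet A) :
    |μ.real A - ν.real A| ≤ 1 - (μ ⊓ ν).real univ := by
  have h₁ := real_add_inf_real_univ_le (μ := μ) (ν := ν) hA
  have h₂ := real_add_inf_real_univ_le (μ := ν) (ν := μ) hA
  rw [inf_comm] at h₂
  exact abs_sub_le_iff.2 ⟨by linarith, by linarith⟩

theorem iSup_abs_real_sub_eq_one_sub_inf_real_univ {s : Set α} (hs : MeasurableSet s)
    (hνμ : ν.restrict s ≤ μ.restrict s) (hμν : μ.restrict sᶜ ≤ ν.restrict sᶜ) :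
    ⨆ A : {A : Set α // MeasurableSet A}, |μ.real A - ν.real A| = 1 - (μ ⊓ ν).real univ := by
  have h_bdd (A : {A : Set α // MeasurableSet A}) :=
    abs_real_sub_le_one_sub_inf_real_univ (μ := μ) (ν := ν) A.2
  refine le_antisymm (ciSup_le h_bdd)
    (le_ciSup_of_le ⟨_, forall_mem_range.2 h_bdd⟩ ⟨s, hs⟩ ?_)
  have h_inf : (μ ⊓ ν).real univ = μ.real sᶜ + ν.real s := by
    simp [inf_eq_restrict_add_restrict hs hνμ hμν, measureReal_def, ENNReal.toReal_add]
  rw [h_inf, probReal_compl_eq_one_sub hs]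
  exact le_trans (by linarith) (le_abs_self _)

end MeasureTheory.Measure

namespace ProbabilityTheory

theorem gaussianReal_restrict_le {m m' : ℝ} {v : ℝ≥0} (hv : v ≠ 0) {s : Set ℝ}
    (hs : MeasurableSet s) (h : ∀ x ∈ s, (x - m') ^ 2 ≤ (x - m) ^ 2) :
    (gaussianReal m v).restrict s ≤ (gaussianReal m' v).restrict s := by
  rw [gaussianReal_of_var_ne_zero _ hv, gaussianReal_of_var_ne_zero _ hv,
    restrict_withDensity hs, restrict_withDensity hs]
  refine withDensity_mono (ae_restrict_of_forall_mem hs fun x hx ↦ ?_)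
  simp only [gaussianPDF, gaussianPDFReal]
  gcongr ENNReal.ofReal (_ * Real.exp (-?_ / _))
  exact h x hx

theorem gaussianReal_Iio_half_eq_Ici_half {v : ℝ≥0} (hv : v ≠ 0) (a : ℝ) :
    gaussianReal a v (Iio (a / 2)) = gaussianReal 0 v (Ici (a / 2)) := by
  have : NullSingletonClass (gaussianReal 0 v) := nullSingletonClass_gaussianReal hv
  have h_preimage : (a - ·) ⁻¹' Iio (a / 2) = Ioi (a / 2) := by
    ext x; simp only [mem_preimage, mem_Iio, mem_Ioi]; constructor <;> intro <;> linarith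
  rw [← sub_zero a, ← gaussianReal_map_const_sub,
    Measure.map_apply (by fun_prop) measurableSet_Iio, sub_zero, h_preimage,
    measure_congr Ioi_ae_eq_Ici]

theorem gaussianReal_Ici_eq {σ : ℝ≥0} (hσ : 0 < σ) (c : ℝ) :
    gaussianReal 0 (σ ^ 2) (Ici c) = gaussianReal 0 1 (Ici (c / σ)) := by
  have h_std : (gaussianReal 0 (σ ^ 2)).map (· / (σ : ℝ)) = gaussianReal 0 1 := by
    rw [gaussianReal_map_div_const, zero_div]
    congr
    ext; simp [hσ.ne']
  have h_preimage : (· / (σ : ℝ)) ⁻¹' Ici (c / σ) = Ici c := by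
    ext x; simp [div_le_div_iff_of_pos_right (show (0 : ℝ) < σ from hσ)]
  rw [← h_std, Measure.map_apply (by fun_prop) measurableSet_Ici, h_preimage]

end ProbabilityTheory

/-- For `γ = N(0,σ²)` and the translation `T_a : x ↦ x + a` with `a > 0`, the lattice infimum
of `γ` and `T_a#γ` has total mass `2·γ₁([a/(2σ), ∞))`; equivalently the total variation distance
between `N(0,σ²)` and `N(a,σ²)` equals `1 − 2·γ₁([a/(2σ), ∞))`. -/
theorem mass_of_inf_translate_gaussianReal
    (σ : ℝ≥0) (hσ : 0 < σ) (a : ℝ) (ha : 0 < a) :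
    (gaussianReal 0 (σ ^ 2) ⊓ (gaussianReal 0 (σ ^ 2)).map (fun x => x + a)) Set.univ
        = 2 * gaussianReal 0 1 (Set.Ici (a / (2 * (σ : ℝ))))
    ∧ (⨆ A : {s : Set ℝ // MeasurableSet s},
          |(gaussianReal 0 (σ ^ 2) A.1).toReal - (gaussianReal a (σ ^ 2) A.1).toReal|)
        = 1 - 2 * (gaussianReal 0 1 (Set.Ici (a / (2 * (σ : ℝ))))).toReal := by
  have hv : σ ^ 2 ≠ 0 := by positivity
  have hνμ : (gaussianReal a (σ ^ 2)).restrict (Iio (a / 2)) ≤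
      (gaussianReal 0 (σ ^ 2)).restrict (Iio (a / 2)) :=
    gaussianReal_restrict_le hv measurableSet_Iio fun x hx ↦ by nlinarith [mem_Iio.1 hx]
  have hμν : (gaussianReal 0 (σ ^ 2)).restrict (Iio (a / 2))ᶜ ≤
      (gaussianReal a (σ ^ 2)).restrict (Iio (a / 2))ᶜ :=
    gaussianReal_restrict_le hv measurableSet_Iio.compl fun x hx ↦ by
      nlinarith [show a / 2 ≤ x from not_lt.1 hx]
  have h_mass : (gaussianReal 0 (σ ^ 2) ⊓ gaussianReal a (σ ^ 2)) univ
      = 2 * gaussianReal 0 1 (Ici (a / (2 * σ))) := by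
    rw [Measure.inf_eq_restrict_add_restrict measurableSet_Iio hνμ hμν, Measure.add_apply,
      Measure.restrict_apply_univ, Measure.restrict_apply_univ, compl_Iio,
      gaussianReal_Iio_half_eq_Ici_half hv, gaussianReal_Ici_eq hσ, div_div]
    exact (two_mul _).symm
  rw [gaussianReal_map_add_const, zero_add]
  refine ⟨h_mass, ?_⟩
  have h_tv := Measure.iSup_abs_real_sub_eq_one_sub_inf_real_univ measurableSet_Iio hνμ hμν
  rwa [measureReal_def, h_mass, ENNReal.toReal_mul, ENNReal.toReal_ofNat] at h_tv
end
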